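/- Let U and Q be real normed vector spaces. Let m, a, b : U × U → ℝ and m_T, a_T : Q × Q → ℝ and c : U × Q → ℝ be continuous bilinear forms, with m, a, b and m_T symmetric. Assume there exist μ₀, μ₁ > 0 such that m(v, v) ≥ μ₀ ‖v‖²_U for all v ∈ U and m_T(S, S) ≥ μ₁ ‖S‖²_Q for all S ∈ Q, and that a, b and a_T are positive semidefinite. Let T_f > 0, let F : [0, T_f] → U* and H : [0, T_f] → Q* be continuous, and suppose X ∈ C²([0, T_f]; U) and Θ ∈ C¹([0, T_f]; Q) satisfy, for every t ∈ [0, T_f] and every (v, S) ∈ U × Q: m(Ẍ(t), v) + b(Ẋ(t), v) + m_T(Θ̇(t), S) + c(Ẋ(t), S) + a(X(t), v) + a_T(Θ(t), S) − c(v, Θ(t)) = F(t)(v) + H(t)(S). Define the energy norm ‖(X, Θ)(t)‖²_E = m(Ẋ(t), Ẋ(t)) + m_T(Θ(t), Θ(t)) + a(X(t), X(t)) + b(X(t), X(t)). Then there exists a constant C > 0, depending only on μ₀, μ₁ and T_f (and not on X, Θ, F, H), such that sup_{t ∈ [0, T_f]} ( ‖(X, Θ)(t)‖²_E + ∫₀ᵗ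 a_T(Θ(s), Θ(s)) ds )^{1/2} ≤ C ( ‖(X, Θ)(0)‖_E + ∫₀^{T_f} ( ‖F(s)‖_{U*} + ‖H(s)‖_{Q*} ) ds ). -/

import Mathlib

/-!
Testing the system with `(v, S) = (Ẋ, Θ)` cancels the coupling `c` and yields the energy
identity `e' = 2 (F Ẋ + H Θ) - 2 (b(Ẋ, Ẋ) + a_T(Θ, Θ))` for `e = m(Ẋ, Ẋ) + m_T(Θ, Θ) + a(X, X)`.
Coercivity of `m` and `m_T` bounds the power `F Ẋ + H Θ` by
`(μ₀^{-1/2} + μ₁^{-1/2}) (‖F‖ + ‖H‖) √e`, and evaluating the integrated identity at a maximiser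
of `Φ = e + 2 ∫ (b(Ẋ, Ẋ) + a_T(Θ, Θ))` gives a quadratic inequality for `√Φ`. The remaining term
`b(X, X)` has derivative `2 b(X, Ẋ)`; Young's inequality and the bound on `∫ b(Ẋ, Ẋ)` just
obtained control it by a second maximum argument, which replaces Gronwall's lemma.
-/

open Set intervalIntegral

theorem ContinuousOn.intervalIntegrable_of_mem_Icc {E : Type*} [NormedAddCommGroup E]
    {f : ℝ → E} {a b r : ℝ} (hf : ContinuousOn f (Icc a b)) (hr : r ∈ Icc a b) :
    IntervalIntegrable f MeasureTheory.volume a r :=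
  (hf.mono (Icc_subset_Icc_right hr.2)).intervalIntegrable_of_Icc hr.1

theorem integral_eq_sub_of_hasDerivWithinAt_Icc {E : Type*} [NormedAddCommGroup E]
    [NormedSpace ℝ E] [CompleteSpace E] {f f' : ℝ → E} {a b r : ℝ}
    (hf : ∀ x ∈ Icc a b, HasDerivWithinAt f (f' x) (Icc a b) x)
    (hf' : ContinuousOn f' (Icc a b)) (hr : r ∈ Icc a b) :
    ∫ x in a..r, f' x = f r - f a := by
  have hsub : Icc a r ⊆ Icc a b := Icc_subset_Icc_right hr.2
  refine integral_eq_sub_of_hasDeriv_right_of_le hr.1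
    (fun x hx => (hf x (hsub hx)).continuousWithinAt.mono hsub)
    (fun x hx => (hf x (hsub (Ioo_subset_Icc_self hx))).mono_of_mem_nhdsWithin ?_)
    (hf'.intervalIntegrable_of_mem_Icc hr)
  exact Icc_mem_nhdsGT_of_mem ⟨hx.1.le, hx.2.trans_le hr.2⟩

theorem le_sq_of_le_add_integral_mul_sqrt {φ g : ℝ → ℝ} {A a b : ℝ}
    (hφ : ContinuousOn φ (Icc a b)) (hφ0 : ∀ s ∈ Icc a b, 0 ≤ φ s)
    (hg : ContinuousOn g (Icc a b)) (hg0 : ∀ s ∈ Icc a b, 0 ≤ g s)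
    (h : ∀ r ∈ Icc a b, φ r ≤ A + 2 * ∫ s in a..r, g s * √(φ s)) :
    ∀ r ∈ Icc a b, φ r ≤ (√A + 2 * ∫ s in a..b, g s) ^ 2 := by
  intro r hr
  have hab : a ≤ b := hr.1.trans hr.2
  obtain ⟨s, hs, hmax⟩ := isCompact_Icc.exists_isMaxOn (nonempty_Icc.2 hab) hφ
  set N := √(φ s)
  set G := ∫ x in a..b, g x
  have hφN : ∀ x ∈ Icc a b, √(φ x) ≤ N := fun x hx => Real.sqrt_le_sqrt (hmax hx)
  have hgs : IntervalIntegrable g MeasureTheory.volume a s := hg.intervalIntegrable_of_mem_Icc hs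
  have hquad : N ^ 2 ≤ A + 2 * G * N := calc
    N ^ 2 = φ s := Real.sq_sqrt (hφ0 s hs)
    _ ≤ A + 2 * ∫ x in a..s, g x * √(φ x) := h s hs
    _ ≤ A + 2 * ∫ x in a..s, g x * N := by
      gcongr
      refine integral_mono_on hs.1 ?_ (hgs.mul_const N) fun x hx => ?_
      · exact (hg.mul hφ.sqrt).intervalIntegrable_of_mem_Icc hs
      · exact mul_le_mul_of_nonneg_left (hφN x ⟨hx.1, hx.2.trans hs.2⟩)
          (hg0 x ⟨hx.1, hx.2.trans hs.2⟩)
    _ = A + 2 * (∫ x in a..s, g x) * N := by rw [integral_mul_const]; ring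
    _ ≤ A + 2 * G * N := by
      gcongr
      exact integral_mono_interval le_rfl hs.1 hs.2
        (MeasureTheory.ae_restrict_of_forall_mem measurableSet_Ioc
          fun x hx => hg0 x (Ioc_subset_Icc_self hx))
        (hg.intervalIntegrable_of_Icc hab)
  have hA : 0 ≤ A := by simpa using (hφ0 a ⟨le_rfl, hab⟩).trans (h a ⟨le_rfl, hab⟩)
  have hG : 0 ≤ G := integral_nonneg hab hg0
  have hN : N ≤ √A + 2 * G := by
    nlinarith [Real.sq_sqrt hA, Real.sqrt_nonneg A, Real.sqrt_nonneg (φ s)]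
  calc φ r ≤ N ^ 2 := (hmax hr).trans (Real.sq_sqrt (hφ0 s hs)).ge
    _ ≤ (√A + 2 * G) ^ 2 := pow_le_pow_left₀ (Real.sqrt_nonneg _) hN 2

theorem le_two_mul_of_le_add_mul_integral {φ : ℝ → ℝ} {A κ a b : ℝ}
    (hφ : ContinuousOn φ (Icc a b)) (hφ0 : ∀ s ∈ Icc a b, 0 ≤ φ s) (hκ : 0 ≤ κ)
    (hκab : κ * (b - a) ≤ 1 / 2) (h : ∀ r ∈ Icc a b, φ r ≤ A + κ * ∫ s in a..r, φ s) :
    ∀ r ∈ Icc a b, φ r ≤ 2 * A := by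
  intro r hr
  obtain ⟨s, hs, hmax⟩ := isCompact_Icc.exists_isMaxOn (nonempty_Icc.2 (hr.1.trans hr.2)) hφ
  have hint : ∫ x in a..s, φ x ≤ (b - a) * φ s := calc
    ∫ x in a..s, φ x ≤ ∫ x in a..s, φ s :=
      integral_mono_on hs.1 (hφ.intervalIntegrable_of_mem_Icc hs) intervalIntegrable_const
        fun x hx => hmax ⟨hx.1, hx.2.trans hs.2⟩
    _ = (s - a) * φ s := by rw [integral_const, smul_eq_mul]
    _ ≤ (b - a) * φ s := by gcongr; exacts [hφ0 s hs, hs.2]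
  have hκint : κ * ∫ x in a..s, φ x ≤ φ s / 2 := by
    nlinarith [mul_le_mul_of_nonneg_left hint hκ, hφ0 s hs]
  have hrs : φ r ≤ φ s := hmax hr
  linarith [h s hs]

theorem le_sq_of_hasDerivWithinAt_energy {e P D g : ℝ → ℝ} {a b : ℝ}
    (he : ∀ s ∈ Icc a b, HasDerivWithinAt e (2 * P s - 2 * D s) (Icc a b) s)
    (hP : ContinuousOn P (Icc a b)) (hD : ContinuousOn D (Icc a b))
    (hg : ContinuousOn g (Icc a b)) (he0 : ∀ s ∈ Icc a b, 0 ≤ e s)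
    (hD0 : ∀ s ∈ Icc a b, 0 ≤ D s) (hg0 : ∀ s ∈ Icc a b, 0 ≤ g s)
    (hPg : ∀ s ∈ Icc a b, P s ≤ g s * √(e s)) :
    ∀ r ∈ Icc a b, e r + 2 * ∫ s in a..r, D s ≤ (√(e a) + 2 * ∫ s in a..b, g s) ^ 2 := by
  intro r hr
  have hab : a ≤ b := hr.1.trans hr.2
  set Φ : ℝ → ℝ := fun r => e r + 2 * ∫ s in a..r, D s
  have hΦ : ContinuousOn Φ (Icc a b) := by
    have hprim := intervalIntegral.continuousOn_primitive_interval (μ := MeasureTheory.volume)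
      (a := a) (b := b) (f := D) (by rw [uIcc_of_le hab]; exact hD.integrableOn_Icc)
    rw [uIcc_of_le hab] at hprim
    exact (HasDerivWithinAt.continuousOn he).add (continuousOn_const.mul hprim)
  have he_le_Φ : ∀ s ∈ Icc a b, e s ≤ Φ s := fun s hs =>
    le_add_of_nonneg_right (mul_nonneg zero_le_two (integral_nonneg hs.1 fun x hx =>
      hD0 x ⟨hx.1, hx.2.trans hs.2⟩))
  refine le_sq_of_le_add_integral_mul_sqrt hΦ (fun s hs => (he0 s hs).trans (he_le_Φ s hs)) hg
    hg0 (fun s hs => ?_) r hr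
  have hbalance : Φ s = e a + 2 * ∫ x in a..s, P x := by
    have hP' := hP.intervalIntegrable_of_mem_Icc hs
    have hD' := hD.intervalIntegrable_of_mem_Icc hs
    have hftc := integral_eq_sub_of_hasDerivWithinAt_Icc he
      ((continuousOn_const.mul hP).sub (continuousOn_const.mul hD)) hs
    rw [integral_sub (hP'.const_mul 2) (hD'.const_mul 2), integral_const_mul,
      integral_const_mul] at hftc
    simp only [Φ]
    linarith
  rw [hbalance]
  gcongr
  refine integral_mono_on hs.1 (hP.intervalIntegrable_of_mem_Icc hs)
    ((hg.mul hΦ.sqrt).intervalIntegrable_of_mem_Icc hs) fun x hx => ?_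
  have hx' : x ∈ Icc a b := ⟨hx.1, hx.2.trans hs.2⟩
  exact (hPg x hx').trans
    (mul_le_mul_of_nonneg_left (Real.sqrt_le_sqrt (he_le_Φ x hx')) (hg0 x hx'))

section BilinearForm

variable {E : Type*} [NormedAddCommGroup E] [NormedSpace ℝ E]

theorem ContinuousLinearMap.two_mul_le_mul_add_inv_mul (B : E →L[ℝ] E →L[ℝ] ℝ)
    (hB : ∀ x y, B x y = B y x) (hB0 : ∀ x, 0 ≤ B x x) {κ : ℝ} (hκ : 0 < κ) (x y : E) :
    2 * B x y ≤ κ * B x x + κ⁻¹ * B y y := by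
  have h := hB0 (κ • x - y)
  simp only [map_sub, map_smul, sub_apply, smul_apply, smul_eq_mul, hB y x] at h
  calc 2 * B x y ≤ 2 * B x y + κ⁻¹ * (κ * (κ * B x x - B x y) - (κ * B x y - B y y)) :=
        le_add_of_nonneg_right (mul_nonneg (inv_nonneg.2 hκ.le) h)
    _ = κ * B x x + κ⁻¹ * B y y := by field_simp; ring

theorem HasDerivWithinAt.clm_apply_self (B : E →L[ℝ] E →L[ℝ] ℝ) (hB : ∀ x y, B x y = B y x)
    {x : ℝ → E} {x' : E} {s : Set ℝ} {t : ℝ} (hx : HasDerivWithinAt x x' s t) :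
    HasDerivWithinAt (fun r => B (x r) (x r)) (2 * B (x t) x') s t := by
  have h := (B.hasFDerivAt.comp_hasDerivWithinAt t hx).clm_apply hx
  rwa [Function.comp_apply, hB x' (x t), ← two_mul] at h

theorem ContinuousLinearMap.apply_le_of_coercive (ℓ : E →L[ℝ] ℝ) {μ q : ℝ} {v : E}
    (hμ : 0 < μ) (hv : μ * ‖v‖ ^ 2 ≤ q) : ℓ v ≤ ‖ℓ‖ * (√μ)⁻¹ * √q := by
  have hnorm : ‖v‖ ≤ (√μ)⁻¹ * √q := by
    rw [inv_mul_eq_div, ← Real.sqrt_div' _ hμ.le]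
    exact Real.le_sqrt_of_sq_le ((le_div_iff₀ hμ).2 (by linarith))
  calc ℓ v ≤ ‖ℓ‖ * ‖v‖ := (le_abs_self _).trans (ℓ.le_opNorm v)
    _ ≤ ‖ℓ‖ * (√μ)⁻¹ * √q := by rw [mul_assoc]; gcongr

theorem ContinuousLinearMap.apply_self_le_of_hasDerivWithinAt (B : E →L[ℝ] E →L[ℝ] ℝ)
    (hB : ∀ x y, B x y = B y x) (hB0 : ∀ x, 0 ≤ B x x) {x x' : ℝ → E} {T J : ℝ} (hT : 0 < T)
    (hx : ∀ t ∈ Icc 0 T, HasDerivWithinAt x (x' t) (Icc 0 T) t)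
    (hx' : ContinuousOn x' (Icc 0 T))
    (hJ : ∀ r ∈ Icc 0 T, ∫ s in 0..r, B (x' s) (x' s) ≤ J) :
    ∀ r ∈ Icc 0 T, B (x r) (x r) ≤ 2 * (B (x 0) (x 0) + 2 * T * J) := by
  have hxc : ContinuousOn x (Icc 0 T) := HasDerivWithinAt.continuousOn hx
  have hκ : 0 < (2 * T)⁻¹ := by positivity
  refine le_two_mul_of_le_add_mul_integral (by fun_prop) (fun s _ => hB0 _) hκ.le
    (by field_simp; simp) fun r hr => ?_
  have hftc : ∫ s in 0..r, 2 * B (x s) (x' s) = B (x r) (x r) - B (x 0) (x 0) :=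
    integral_eq_sub_of_hasDerivWithinAt_Icc (fun s hs => (hx s hs).clm_apply_self B hB)
      (by fun_prop) hr
  have hint {f : ℝ → ℝ} (hf : ContinuousOn f (Icc 0 T)) : IntervalIntegrable f _ 0 r :=
    hf.intervalIntegrable_of_mem_Icc hr
  -- the weight `(2T)⁻¹` in Young's inequality makes the `∫ B(x,x)` term absorbable
  calc B (x r) (x r) = B (x 0) (x 0) + ∫ s in 0..r, 2 * B (x s) (x' s) := by linarith
    _ ≤ B (x 0) (x 0) + ∫ s in 0..r, ((2 * T)⁻¹ * B (x s) (x s) + 2 * T * B (x' s) (x' s)) := by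
      gcongr
      refine integral_mono_on hr.1 (hint (by fun_prop)) (hint (by fun_prop)) fun s _ => ?_
      simpa only [inv_inv] using B.two_mul_le_mul_add_inv_mul hB hB0 hκ (x s) (x' s)
    _ = B (x 0) (x 0) + 2 * T * (∫ s in 0..r, B (x' s) (x' s))
          + (2 * T)⁻¹ * ∫ s in 0..r, B (x s) (x s) := by
      rw [integral_add (hint (by fun_prop)) (hint (by fun_prop)), integral_const_mul,
        integral_const_mul]
      ring
    _ ≤ B (x 0) (x 0) + 2 * T * J + (2 * T)⁻¹ * ∫ s in 0..r, B (x s) (x s) := by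
      gcongr
      exact hJ r hr

end BilinearForm

section Energy

variable {U Q : Type*} [NormedAddCommGroup U] [NormedSpace ℝ U] [NormedAddCommGroup Q]
  [NormedSpace ℝ Q]

theorem hasDerivWithinAt_energy (m a b : U →L[ℝ] U →L[ℝ] ℝ) (mT aT : Q →L[ℝ] Q →L[ℝ] ℝ)
    (c : U →L[ℝ] Q →L[ℝ] ℝ) (hm : ∀ x y, m x y = m y x) (ha : ∀ x y, a x y = a y x)
    (hmT : ∀ x y, mT x y = mT y x) {f : U →L[ℝ] ℝ} {h : Q →L[ℝ] ℝ} {X X' : ℝ → U}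
    {Θ : ℝ → Q} {X'' : U} {Θ' : Q} {s : Set ℝ} {t : ℝ} (hX : HasDerivWithinAt X (X' t) s t)
    (hX' : HasDerivWithinAt X' X'' s t) (hΘ : HasDerivWithinAt Θ Θ' s t)
    (heq : ∀ v S, m X'' v + b (X' t) v + mT Θ' S + c (X' t) S + a (X t) v + aT (Θ t) S
      - c v (Θ t) = f v + h S) :
    HasDerivWithinAt (fun r => m (X' r) (X' r) + mT (Θ r) (Θ r) + a (X r) (X r))
      (2 * (f (X' t) + h (Θ t)) - 2 * (b (X' t) (X' t) + aT (Θ t) (Θ t))) s t := by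
  have hderiv := ((hX'.clm_apply_self m hm).add (hΘ.clm_apply_self mT hmT)).add
    (hX.clm_apply_self a ha)
  -- testing with `(v, S) = (X' t, Θ t)` makes the coupling terms cancel
  have hbalance : 2 * m (X' t) X'' + 2 * mT (Θ t) Θ' + 2 * a (X t) (X' t)
      = 2 * (f (X' t) + h (Θ t)) - 2 * (b (X' t) (X' t) + aT (Θ t) (Θ t)) := by
    linarith [heq (X' t) (Θ t), hm (X' t) X'', hmT (Θ t) Θ']
  rwa [hbalance] at hderiv

theorem energy_le {μ₀ μ₁ T : ℝ} (hμ₀ : 0 < μ₀) (hμ₁ : 0 < μ₁) (m a b : U →L[ℝ] U →L[ℝ] ℝ)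
    (mT aT : Q →L[ℝ] Q →L[ℝ] ℝ) (c : U →L[ℝ] Q →L[ℝ] ℝ) (hm : ∀ x y, m x y = m y x)
    (ha : ∀ x y, a x y = a y x) (hmT : ∀ x y, mT x y = mT y x)
    (hm0 : ∀ v, μ₀ * ‖v‖ ^ 2 ≤ m v v) (hmT0 : ∀ S, μ₁ * ‖S‖ ^ 2 ≤ mT S S)
    (ha0 : ∀ v, 0 ≤ a v v) (hb0 : ∀ v, 0 ≤ b v v) (haT0 : ∀ S, 0 ≤ aT S S)
    {F : ℝ → U →L[ℝ] ℝ} {H : ℝ → Q →L[ℝ] ℝ} (hF : ContinuousOn F (Icc 0 T))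
    (hH : ContinuousOn H (Icc 0 T)) {X X' X'' : ℝ → U} {Θ Θ' : ℝ → Q}
    (hX : ∀ t ∈ Icc 0 T, HasDerivWithinAt X (X' t) (Icc 0 T) t)
    (hX' : ∀ t ∈ Icc 0 T, HasDerivWithinAt X' (X'' t) (Icc 0 T) t)
    (hΘ : ∀ t ∈ Icc 0 T, HasDerivWithinAt Θ (Θ' t) (Icc 0 T) t)
    (heq : ∀ t ∈ Icc 0 T, ∀ v S, m (X'' t) v + b (X' t) v + mT (Θ' t) S + c (X' t) S
      + a (X t) v + aT (Θ t) S - c v (Θ t) = F t v + H t S) :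
    ∀ r ∈ Icc 0 T, m (X' r) (X' r) + mT (Θ r) (Θ r) + a (X r) (X r)
        + 2 * ((∫ s in 0..r, b (X' s) (X' s)) + ∫ s in 0..r, aT (Θ s) (Θ s))
      ≤ (√(m (X' 0) (X' 0) + mT (Θ 0) (Θ 0) + a (X 0) (X 0))
        + 2 * ((√μ₀)⁻¹ + (√μ₁)⁻¹) * ∫ s in 0..T, (‖F s‖ + ‖H s‖)) ^ 2 := by
  intro r hr
  have hX'c : ContinuousOn X' (Icc 0 T) := HasDerivWithinAt.continuousOn hX'
  have hΘc : ContinuousOn Θ (Icc 0 T) := HasDerivWithinAt.continuousOn hΘ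
  set e : ℝ → ℝ := fun s => m (X' s) (X' s) + mT (Θ s) (Θ s) + a (X s) (X s)
  have hm_le_e : ∀ s, μ₀ * ‖X' s‖ ^ 2 ≤ e s := fun s => by
    nlinarith [hm0 (X' s), hmT0 (Θ s), ha0 (X s), sq_nonneg ‖Θ s‖]
  have hmT_le_e : ∀ s, μ₁ * ‖Θ s‖ ^ 2 ≤ e s := fun s => by
    nlinarith [hm0 (X' s), hmT0 (Θ s), ha0 (X s), sq_nonneg ‖X' s‖]
  have hpower : ∀ s, F s (X' s) + H s (Θ s)
      ≤ ((√μ₀)⁻¹ + (√μ₁)⁻¹) * (‖F s‖ + ‖H s‖) * √(e s) := fun s => by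
    have hF' := (F s).apply_le_of_coercive hμ₀ (hm_le_e s)
    have hH' := (H s).apply_le_of_coercive hμ₁ (hmT_le_e s)
    have : 0 ≤ ‖F s‖ * (√μ₁)⁻¹ * √(e s) + ‖H s‖ * (√μ₀)⁻¹ * √(e s) := by positivity
    linarith
  have key := le_sq_of_hasDerivWithinAt_energy
    (g := fun s => ((√μ₀)⁻¹ + (√μ₁)⁻¹) * (‖F s‖ + ‖H s‖))
    (fun s hs => hasDerivWithinAt_energy m a b mT aT c hm ha hmT (hX s hs) (hX' s hs) (hΘ s hs)
      (heq s hs))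
    ((hF.clm_apply hX'c).add (hH.clm_apply hΘc)) (by fun_prop)
    (continuousOn_const.mul (hF.norm.add hH.norm))
    (fun s _ => (mul_nonneg hμ₀.le (sq_nonneg _)).trans (hm_le_e s))
    (fun s _ => add_nonneg (hb0 _) (haT0 _)) (fun s _ => by positivity) (fun s _ => hpower s) r hr
  rwa [integral_add, integral_const_mul, ← mul_assoc] at key
  all_goals exact ContinuousOn.intervalIntegrable_of_mem_Icc (by fun_prop) hr

end Energy

theorem sqrt_le_mul_sqrt_add_of_le {x e₀ β₀ I c T : ℝ} (hT : 0 ≤ T) (hc : 0 ≤ c)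
    (he₀ : 0 ≤ e₀) (hβ₀ : 0 ≤ β₀) (hI : 0 ≤ I)
    (hx : x ≤ (1 + 2 * T) * (√e₀ + 2 * c * I) ^ 2 + 2 * β₀) :
    √x ≤ √((1 + 2 * T) * (1 + 2 * c) ^ 2 + 2) * (√(e₀ + β₀) + I) := by
  set R := √(e₀ + β₀) + I
  have hsqrt : √e₀ ≤ √(e₀ + β₀) := Real.sqrt_le_sqrt (by linarith)
  have hK : √e₀ + 2 * c * I ≤ (1 + 2 * c) * R := by
    nlinarith [Real.sqrt_nonneg (e₀ + β₀)]
  have hβR : β₀ ≤ R ^ 2 := by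
    nlinarith [Real.sq_sqrt (add_nonneg he₀ hβ₀), Real.sqrt_nonneg (e₀ + β₀)]
  calc √x ≤ √(((1 + 2 * T) * (1 + 2 * c) ^ 2 + 2) * R ^ 2) := by
        refine Real.sqrt_le_sqrt (hx.trans ?_)
        have : (√e₀ + 2 * c * I) ^ 2 ≤ ((1 + 2 * c) * R) ^ 2 := by gcongr
        nlinarith
    _ = √((1 + 2 * T) * (1 + 2 * c) ^ 2 + 2) * R := by
        rw [Real.sqrt_mul (by positivity), Real.sqrt_sq (by positivity)]

/-- Abstract stability estimate for the semi-discrete thermo-poroelastic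
problem (τ = 0): there is a constant `C > 0` depending only on `μ₀, μ₁, T_f` such that for
any coercive mass forms, positive semidefinite stiffness/dissipation forms and any solution
of the variational system,
`sup_t (‖(X,Θ)(t)‖²_E + ∫₀ᵗ a_T(Θ,Θ))^{1/2} ≤ C (‖(X,Θ)(0)‖_E + ∫₀^{T_f}(‖F‖ + ‖H‖))`. -/
theorem stmt_7 (μ₀ μ₁ Tf : ℝ) (hμ₀ : 0 < μ₀) (hμ₁ : 0 < μ₁) (hTf : 0 < Tf) :
    ∃ C > (0 : ℝ),
      ∀ (U : Type u) (Q : Type v), ∀ (_ : NormedAddCommGroup U) (_ : NormedSpace ℝ U)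
        (_ : NormedAddCommGroup Q) (_ : NormedSpace ℝ Q),
      ∀ (m a b : U →L[ℝ] U →L[ℝ] ℝ) (mT aT : Q →L[ℝ] Q →L[ℝ] ℝ) (c : U →L[ℝ] Q →L[ℝ] ℝ),
        (∀ x y : U, m x y = m y x) →
        (∀ x y : U, a x y = a y x) →
        (∀ x y : U, b x y = b y x) →
        (∀ x y : Q, mT x y = mT y x) →
        (∀ v : U, μ₀ * ‖v‖ ^ 2 ≤ m v v) →
        (∀ S : Q, μ₁ * ‖S‖ ^ 2 ≤ mT S S) →
        (∀ v : U, 0 ≤ a v v) →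
        (∀ v : U, 0 ≤ b v v) →
        (∀ S : Q, 0 ≤ aT S S) →
      ∀ (F : ℝ → (U →L[ℝ] ℝ)) (H : ℝ → (Q →L[ℝ] ℝ)),
        ContinuousOn F (Icc (0 : ℝ) Tf) → ContinuousOn H (Icc (0 : ℝ) Tf) →
      ∀ (X X' X'' : ℝ → U) (Θ Θ' : ℝ → Q),
        (∀ t ∈ Icc (0 : ℝ) Tf, HasDerivWithinAt X (X' t) (Icc (0 : ℝ) Tf) t) →
        (∀ t ∈ Icc (0 : ℝ) Tf, HasDerivWithinAt X' (X'' t) (Icc (0 : ℝ) Tf) t) →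
        ContinuousOn X'' (Icc (0 : ℝ) Tf) →
        (∀ t ∈ Icc (0 : ℝ) Tf, HasDerivWithinAt Θ (Θ' t) (Icc (0 : ℝ) Tf) t) →
        ContinuousOn Θ' (Icc (0 : ℝ) Tf) →
        (∀ t ∈ Icc (0 : ℝ) Tf, ∀ (v : U) (S : Q),
          m (X'' t) v + b (X' t) v + mT (Θ' t) S + c (X' t) S
            + a (X t) v + aT (Θ t) S - c v (Θ t) = F t v + H t S) →
      ∀ t ∈ Icc (0 : ℝ) Tf,
        Real.sqrt ((m (X' t) (X' t) + mT (Θ t) (Θ t) + a (X t) (X t) + b (X t) (X t))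
              + ∫ s in (0 : ℝ)..t, aT (Θ s) (Θ s))
          ≤ C * (Real.sqrt (m (X' 0) (X' 0) + mT (Θ 0) (Θ 0)
                  + a (X 0) (X 0) + b (X 0) (X 0))
              + ∫ s in (0 : ℝ)..Tf, (‖F s‖ + ‖H s‖)) := by
  refine ⟨√((1 + 2 * Tf) * (1 + 2 * ((√μ₀)⁻¹ + (√μ₁)⁻¹)) ^ 2 + 2), by positivity, ?_⟩
  intro U Q _ _ _ _ m a b mT aT c hm ha hb hmT hm0 hmT0 ha0 hb0 haT0 F H hF hH X X' X'' Θ Θ'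
    hX hX' _ hΘ _ heq t ht
  have henergy := energy_le hμ₀ hμ₁ m a b mT aT c hm ha hmT hm0 hmT0 ha0 hb0 haT0 hF hH hX hX'
    hΘ heq
  set K := √(m (X' 0) (X' 0) + mT (Θ 0) (Θ 0) + a (X 0) (X 0))
    + 2 * ((√μ₀)⁻¹ + (√μ₁)⁻¹) * ∫ s in 0..Tf, (‖F s‖ + ‖H s‖)
  have hint_nonneg {f : ℝ → ℝ} (hf : ∀ s, 0 ≤ f s) {r : ℝ} (hr : r ∈ Icc 0 Tf) :
      0 ≤ ∫ s in 0..r, f s := integral_nonneg hr.1 fun s _ => hf s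
  have he_nonneg (r : ℝ) : 0 ≤ m (X' r) (X' r) + mT (Θ r) (Θ r) + a (X r) (X r) :=
    add_nonneg (add_nonneg ((mul_nonneg hμ₀.le (sq_nonneg _)).trans (hm0 _))
      ((mul_nonneg hμ₁.le (sq_nonneg _)).trans (hmT0 _))) (ha0 _)
  have hdissipation := b.apply_self_le_of_hasDerivWithinAt hb hb0 hTf hX
    (HasDerivWithinAt.continuousOn hX') (J := K ^ 2 / 2) (fun r hr => by
      linarith [henergy r hr, he_nonneg r, hint_nonneg (fun s => haT0 (Θ s)) hr]) t ht
  refine sqrt_le_mul_sqrt_add_of_le hTf.le (by positivity) (he_nonneg 0) (hb0 _)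
    (hint_nonneg (fun s => by positivity) ⟨hTf.le, le_rfl⟩) ?_
  show _ ≤ (1 + 2 * Tf) * K ^ 2 + 2 * b (X 0) (X 0)
  linarith [henergy t ht, hint_nonneg (fun s => hb0 (X' s)) ht,
    hint_nonneg (fun s => haT0 (Θ s)) ht]
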